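/- arXiv:1304.4549 — 5 statements merged into one kernel-verified Lean document; each statement's English description precedes it below -/
import Mathlib

section
/- Let λ₁,…,λ_K > 0, vectors u₁,…,u_K ∈ ℝ^T with u = Σ_k u_k, and a subset K* ⊆ {1,…,K}. Suppose the restricted eigenvalue condition |u|₂² ≥ κ² Σ_{k∈K*} |u_k|₂² holds and Σ_{k∈K*ᶜ} λ_k |u_k|₂ ≤ Σ_{k∈K*} λ_k |u_k|₂. Then Σ_{k=1}^K λ_k |u_k|₂ ≤ (2/κ)(Σ_{k∈K*} λ_k²)^{1/2} |u|₂. -/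
open BigOperators

/-- Euclidean norm of a finite real vector. -/
noncomputable def fin_enorm {n : ℕ} (w : Fin n → ℝ) : ℝ := Real.sqrt (∑ t, w t ^ 2)

/-!
On `K*` the restricted eigenvalue condition bounds `(Σ_{k∈K*} |u_k|²)^{1/2}` by `|u| / κ`, so
Cauchy–Schwarz gives `Σ_{k∈K*} λ_k |u_k| ≤ (Σ_{k∈K*} λ_k²)^{1/2} |u| / κ`; the cone condition
says the sum over all groups is at most twice the sum over `K*`.
-/

open Finset

lemma sum_le_two_mul_of_sum_compl_le {ι : Type*} [Fintype ι] [DecidableEq ι]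
    (s : Finset ι) (f : ι → ℝ) (h : ∑ i ∈ sᶜ, f i ≤ ∑ i ∈ s, f i) :
    ∑ i, f i ≤ 2 * ∑ i ∈ s, f i := by
  rw [← sum_add_sum_compl s f]
  linarith

lemma sqrt_le_div_of_mul_le_sq {κ x N : ℝ} (hκ : 0 < κ) (hN : 0 ≤ N)
    (h : κ ^ 2 * x ≤ N ^ 2) : √x ≤ N / κ := by
  rw [Real.sqrt_le_left (div_nonneg hN hκ.le), div_pow, le_div_iff₀ (by positivity)]
  linarith

theorem sum_mul_le_of_restricted_eigenvalue {ι : Type*} [Fintype ι] [DecidableEq ι]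
    (lam a : ι → ℝ) (s : Finset ι) {κ N : ℝ} (hκ : 0 < κ) (hN : 0 ≤ N)
    (hRE : κ ^ 2 * ∑ i ∈ s, a i ^ 2 ≤ N ^ 2)
    (hcone : ∑ i ∈ sᶜ, lam i * a i ≤ ∑ i ∈ s, lam i * a i) :
    ∑ i, lam i * a i ≤ 2 / κ * √(∑ i ∈ s, lam i ^ 2) * N := by
  have hCS : ∑ i ∈ s, lam i * a i ≤ √(∑ i ∈ s, lam i ^ 2) * (N / κ) :=
    (Real.sum_mul_le_sqrt_mul_sqrt s lam a).trans <|
      mul_le_mul_of_nonneg_left (sqrt_le_div_of_mul_le_sq hκ hN hRE) (Real.sqrt_nonneg _)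
  calc ∑ i, lam i * a i ≤ 2 * ∑ i ∈ s, lam i * a i := sum_le_two_mul_of_sum_compl_le s _ hcone
    _ ≤ 2 * (√(∑ i ∈ s, lam i ^ 2) * (N / κ)) := by gcongr
    _ = 2 / κ * √(∑ i ∈ s, lam i ^ 2) * N := by ring

theorem gre_cauchy_schwarz_general {K T : ℕ} (lam : Fin K → ℝ)
    (u : Fin K → Fin T → ℝ) (utot : Fin T → ℝ)
    (Kstar : Finset (Fin K)) (κ : ℝ) (hκ : 0 < κ)
    (hGRE : κ ^ 2 * ∑ k ∈ Kstar, fin_enorm (u k) ^ 2 ≤ fin_enorm utot ^ 2)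
    (hcone : ∑ k ∈ Kstarᶜ, lam k * fin_enorm (u k) ≤ ∑ k ∈ Kstar, lam k * fin_enorm (u k)) :
    ∑ k, lam k * fin_enorm (u k) ≤
      (2 / κ) * Real.sqrt (∑ k ∈ Kstar, lam k ^ 2) * fin_enorm utot :=
  sum_mul_le_of_restricted_eigenvalue lam (fun k => fin_enorm (u k)) Kstar hκ
    (Real.sqrt_nonneg _) hGRE hcone

/-- Group-restricted eigenvalue plus Cauchy–Schwarz: if `u = Σ_k u_k`,
`|u|₂² ≥ κ² Σ_{k∈K*} |u_k|₂²` and `Σ_{k∈K*ᶜ} λ_k |u_k|₂ ≤ Σ_{k∈K*} λ_k |u_k|₂`, then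
`Σ_k λ_k |u_k|₂ ≤ (2/κ) (Σ_{k∈K*} λ_k²)^{1/2} |u|₂`. -/
theorem gre_cauchy_schwarz {K T : ℕ} (lam : Fin K → ℝ) (hlam : ∀ k, 0 < lam k)
    (u : Fin K → Fin T → ℝ) (utot : Fin T → ℝ) (hu : utot = ∑ k, u k)
    (Kstar : Finset (Fin K)) (κ : ℝ) (hκ : 0 < κ)
    (hGRE : κ ^ 2 * ∑ k ∈ Kstar, fin_enorm (u k) ^ 2 ≤ fin_enorm utot ^ 2)
    (hcone : ∑ k ∈ Kstarᶜ, lam k * fin_enorm (u k) ≤ ∑ k ∈ Kstar, lam k * fin_enorm (u k)) :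
    ∑ k, lam k * fin_enorm (u k) ≤
      (2 / κ) * Real.sqrt (∑ k ∈ Kstar, lam k ^ 2) * fin_enorm utot :=
  gre_cauchy_schwarz_general lam u utot Kstar κ hκ hGRE hcone
end

section
/- Let R be a T×q matrix, D₁, D₂ be T×T positive definite diagonal matrices, and Y be the T×T diagonal matrix with entries y_t. Set M = (Rᵀ(Y² + D₁⁻¹D₂⁻¹)R)⁺. Then ‖Y R M Rᵀ Y‖ ≤ max_t y_t² / (y_t² + (D₁)_{tt}⁻¹(D₂)_{tt}⁻¹). -/
open Matrix BigOperators

/-- Euclidean norm of a finite real vector. -/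
noncomputable def euclidEnorm {n : ℕ} (w : Fin n → ℝ) : ℝ := Real.sqrt (∑ t, w t ^ 2)

/-! Write `c = y² + d₁⁻¹d₂⁻¹`, `C = diag c` and `S = C^{1/2} R`, so that `N = SᵀS`. Then
`P = S M Sᵀ` is an orthogonal projection: the Penrose conditions force `M` to be symmetric, and
`MNM = M` makes `P` idempotent. Since `Y R M Rᵀ Y = D P D` with `D = Y C^{-1/2}` diagonal,
`‖Y R M Rᵀ Y‖ ≤ ‖D‖² = max_t y_t² / c_t`. -/

open scoped Matrix.Norms.L2Operator

namespace Matrix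

section MoorePenrose

variable {m n R : Type*} [Fintype m] [Fintype n] [CommSemiring R]

structure IsMoorePenroseInverse (A : Matrix m n R) (X : Matrix n m R) : Prop where
  mul_inv_mul : A * X * A = A
  inv_mul_inv : X * A * X = X
  isSymm_mul_inv : (A * X).IsSymm
  isSymm_inv_mul : (X * A).IsSymm

namespace IsMoorePenroseInverse

variable {A : Matrix m n R} {X Y : Matrix n m R}

theorem transpose (hX : IsMoorePenroseInverse A X) : IsMoorePenroseInverse Aᵀ Xᵀ where
  mul_inv_mul := by rw [← transpose_mul, ← transpose_mul, ← Matrix.mul_assoc, hX.mul_inv_mul]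
  inv_mul_inv := by rw [← transpose_mul, ← transpose_mul, ← Matrix.mul_assoc, hX.inv_mul_inv]
  isSymm_mul_inv := by rw [← transpose_mul]; exact hX.isSymm_inv_mul.transpose
  isSymm_inv_mul := by rw [← transpose_mul]; exact hX.isSymm_mul_inv.transpose

theorem unique (hX : IsMoorePenroseInverse A X) (hY : IsMoorePenroseInverse A Y) : X = Y := by
  have hXA : Aᵀ = X * A * Aᵀ := by
    conv_lhs => rw [← hX.mul_inv_mul, Matrix.mul_assoc, transpose_mul, hX.isSymm_inv_mul.eq]
  have hAY : Aᵀ = Aᵀ * (A * Y) := by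
    conv_lhs => rw [← hY.mul_inv_mul, transpose_mul, hY.isSymm_mul_inv.eq]
  have hX_eq : X = X * A * Y := calc
    X = X * (A * X)ᵀ := by rw [hX.isSymm_mul_inv.eq, ← Matrix.mul_assoc, hX.inv_mul_inv]
    _ = X * Xᵀ * (Aᵀ * (A * Y)) := by rw [← hAY, transpose_mul, Matrix.mul_assoc]
    _ = X * (A * X) * (A * Y) := by
      rw [← hX.isSymm_mul_inv.eq, transpose_mul]; simp only [Matrix.mul_assoc]
    _ = X * A * Y := by rw [← Matrix.mul_assoc X A X, hX.inv_mul_inv, Matrix.mul_assoc]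
  have hY_eq : Y = X * A * Y := calc
    Y = (Y * A)ᵀ * Y := by rw [hY.isSymm_inv_mul.eq, hY.inv_mul_inv]
    _ = X * A * Aᵀ * Yᵀ * Y := by rw [← hXA, transpose_mul]
    _ = X * A * (Y * A) * Y := by
      rw [← hY.isSymm_inv_mul.eq, transpose_mul]; simp only [Matrix.mul_assoc]
    _ = X * A * Y := by rw [Matrix.mul_assoc (X * A), hY.inv_mul_inv]
  rw [hX_eq, ← hY_eq]

theorem isSymm {A X : Matrix n n R} (hA : A.IsSymm) (hX : IsMoorePenroseInverse A X) :
    X.IsSymm :=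
  (hA.eq ▸ hX.transpose).unique hX

theorem isStarProjection_mul_mul_transpose [StarRing R] [TrivialStar R] {S : Matrix m n R}
    {X : Matrix n n R} (hX : IsMoorePenroseInverse (Sᵀ * S) X) :
    IsStarProjection (S * X * Sᵀ) := by
  have hX_symm : X.IsSymm := hX.isSymm (by rw [IsSymm, transpose_mul, transpose_transpose])
  refine ⟨?_, ?_⟩
  · calc S * X * Sᵀ * (S * X * Sᵀ) = S * (X * (Sᵀ * S) * X) * Sᵀ := by
          simp only [Matrix.mul_assoc]
      _ = S * X * Sᵀ := by rw [hX.inv_mul_inv]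
  · rw [IsSelfAdjoint, star_eq_conjTranspose, conjTranspose_eq_transpose_of_trivial,
      transpose_mul, transpose_mul, transpose_transpose, hX_symm.eq, Matrix.mul_assoc]

end IsMoorePenroseInverse

end MoorePenrose

section L2OpNorm

variable {n k : Type*} [Fintype n] [Fintype k] [DecidableEq n]

theorem l2_opNorm_diagonal_le_sqrt {d : n → ℝ} {s : ℝ} (hd : ∀ t, d t ^ 2 ≤ s) :
    ‖diagonal d‖ ≤ √s := by
  rw [l2_opNorm_diagonal, pi_norm_le_iff_of_nonneg (Real.sqrt_nonneg s)]
  exact fun t => Real.abs_le_sqrt (hd t)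

theorem l2_opNorm_diagonal_mul_mul_transpose_diagonal_le (R : Matrix n k ℝ) {c : n → ℝ}
    (hc : ∀ t, 0 < c t) (y : n → ℝ) {M : Matrix k k ℝ}
    (hM : IsMoorePenroseInverse (Rᵀ * diagonal c * R) M) :
    ‖diagonal y * R * M * Rᵀ * diagonal y‖ ≤ ‖fun t => y t ^ 2 / c t‖ := by
  set g : n → ℝ := fun t => √(c t)
  set S := diagonal g * R
  have hg : ∀ t, g t ≠ 0 := fun t => (Real.sqrt_pos.2 (hc t)).ne'
  have hN : Rᵀ * diagonal c * R = Sᵀ * S := by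
    have hgg : diagonal g * diagonal g = diagonal c := by
      rw [diagonal_mul_diagonal]
      exact congrArg diagonal (funext fun t => Real.mul_self_sqrt (hc t).le)
    simp only [S, transpose_mul, diagonal_transpose, Matrix.mul_assoc, ← hgg]
  have hfac : diagonal y * R * M * Rᵀ * diagonal y =
      diagonal (y / g) * (S * M * Sᵀ) * diagonal (y / g) := by
    have hy : diagonal (y / g) * diagonal g = diagonal y := by
      rw [diagonal_mul_diagonal]
      exact congrArg diagonal (funext fun t => div_mul_cancel₀ (y t) (hg t))
    have hy' : diagonal g * diagonal (y / g) = diagonal y := (commute_diagonal _ _).eq.trans hy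
    simp only [S, transpose_mul, diagonal_transpose, Matrix.mul_assoc, hy']
    rw [← Matrix.mul_assoc (diagonal (y / g)), hy]
  have hD : ‖diagonal (y / g)‖ ≤ √‖fun t => y t ^ 2 / c t‖ := by
    refine l2_opNorm_diagonal_le_sqrt fun t => ?_
    rw [Pi.div_apply, div_pow, Real.sq_sqrt (hc t).le]
    exact (le_abs_self _).trans (norm_le_pi_norm (fun t => y t ^ 2 / c t) t)
  have hP : ‖S * M * Sᵀ‖ ≤ 1 := (hN ▸ hM).isStarProjection_mul_mul_transpose.norm_le
  calc ‖diagonal y * R * M * Rᵀ * diagonal y‖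
      ≤ ‖diagonal (y / g)‖ * ‖S * M * Sᵀ‖ * ‖diagonal (y / g)‖ := hfac ▸ norm_mul₃_le
    _ ≤ √‖fun t => y t ^ 2 / c t‖ * 1 * √‖fun t => y t ^ 2 / c t‖ := by gcongr
    _ = ‖fun t => y t ^ 2 / c t‖ := by rw [mul_one, Real.mul_self_sqrt (norm_nonneg _)]

end L2OpNorm

end Matrix

theorem euclidEnorm_eq_norm {n : ℕ} (w : Fin n → ℝ) :
    euclidEnorm w = ‖(WithLp.toLp 2 w : EuclideanSpace ℝ (Fin n))‖ := by
  simp [euclidEnorm, EuclideanSpace.norm_eq]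

theorem euclidEnorm_mulVec_le {m n : ℕ} (A : Matrix (Fin m) (Fin n) ℝ) (w : Fin n → ℝ) :
    euclidEnorm (A *ᵥ w) ≤ ‖A‖ * euclidEnorm w := by
  rw [euclidEnorm_eq_norm, euclidEnorm_eq_norm]
  exact A.l2_opNorm_mulVec (WithLp.toLp 2 w)

theorem pi_norm_le_sup'_of_nonneg {ι : Type*} [Fintype ι] {f : ι → ℝ} (hf : 0 ≤ f)
    (h : Finset.univ.Nonempty) : ‖f‖ ≤ Finset.univ.sup' h f := by
  have := Finset.univ_nonempty_iff.mp h
  exact (pi_norm_le_iff_of_nonempty f).2 fun t =>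
    (Real.norm_of_nonneg (hf t)).trans_le (Finset.le_sup' f (Finset.mem_univ t))

/-- Inequality (21b)–(22b) of Lemma 3: with `Y = diag(y)`, `D₁ = diag(d₁)`,
`D₂ = diag(d₂)` positive diagonal matrices and `M = (Rᵀ(Y² + D₁⁻¹D₂⁻¹)R)⁺`, the
spectral norm of `Y R M Rᵀ Y` is at most
`max_t y_t² / (y_t² + d₁(t)⁻¹ d₂(t)⁻¹)`. -/
theorem spectral_norm_YRMRY_bound {T q : ℕ} (hT : 0 < T)
    (R : Matrix (Fin T) (Fin q) ℝ) (y d₁ d₂ : Fin T → ℝ)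
    (hd₁ : ∀ t, 0 < d₁ t) (hd₂ : ∀ t, 0 < d₂ t)
    (N M : Matrix (Fin q) (Fin q) ℝ)
    (hN : N = Rᵀ * Matrix.diagonal (fun t => y t ^ 2 + (d₁ t)⁻¹ * (d₂ t)⁻¹) * R)
    -- the four Penrose conditions for `M = N⁺`
    (hM1 : N * M * N = N) (hM2 : M * N * M = M)
    (hM3 : (N * M)ᵀ = N * M) (hM4 : (M * N)ᵀ = M * N) :
    ∀ w : Fin T → ℝ,
      euclidEnorm ((Matrix.diagonal y * R * M * Rᵀ * Matrix.diagonal y).mulVec w) ≤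
        (Finset.univ.sup' (Finset.univ_nonempty_iff.mpr ⟨⟨0, hT⟩⟩)
          fun t => y t ^ 2 / (y t ^ 2 + (d₁ t)⁻¹ * (d₂ t)⁻¹)) * euclidEnorm w := by
  intro w
  have hc : ∀ t, 0 < y t ^ 2 + (d₁ t)⁻¹ * (d₂ t)⁻¹ := fun t => by
    have := hd₁ t; have := hd₂ t; positivity
  have hM : IsMoorePenroseInverse N M := ⟨hM1, hM2, hM3, hM4⟩
  have hmax := pi_norm_le_sup'_of_nonneg (fun t => div_nonneg (sq_nonneg (y t)) (hc t).le)
    (Finset.univ_nonempty_iff.mpr ⟨⟨0, hT⟩⟩)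
  calc _ ≤ ‖diagonal y * R * M * Rᵀ * diagonal y‖ * euclidEnorm w := euclidEnorm_mulVec_le _ w
    _ ≤ _ := mul_le_mul_of_nonneg_right
      ((l2_opNorm_diagonal_mul_mul_transpose_diagonal_le R hc y (hN ▸ hM)).trans hmax)
      (Real.sqrt_nonneg _)
end

section
/- Let R be a T×q matrix, D_a and D_b positive definite T×T diagonal matrices with (D_a)_{tt} = a_t, (D_b)_{tt} = b_t, and suppose b_t ≤ D̂ a_t for all t with D̂ ≥ 1 and a_t ≤ A for all t. Let M = (Rᵀ(Y² + D_a⁻¹D_b⁻¹)R)⁺ for any diagonal Y. Then ‖R M^{1/2}‖² ≤ D̂ A², where ‖·‖ is the spectral norm. -/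
open Matrix BigOperators

/-! With `S = M^{1/2}`, the Penrose identity `N M N = N` makes `P = S N S` a symmetric idempotent,
so `wᵀ P w ≤ ‖w‖²`. Writing `N = Rᵀ diag(c) R` gives `wᵀ P w = uᵀ diag(c) u` for `u = R S w`,
and every weight satisfies `c_t ≥ 1 / (a_t b_t) ≥ 1 / (D̂ A²)`, hence `‖u‖² ≤ D̂ A² ‖w‖²`. -/

/-- Euclidean norm of a finite real vector. -/
noncomputable def euclidNorm {n : ℕ} (w : Fin n → ℝ) : ℝ := Real.sqrt (∑ t, w t ^ 2)

theorem euclidNorm_sq {n : ℕ} (w : Fin n → ℝ) : euclidNorm w ^ 2 = w ⬝ᵥ w := by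
  rw [euclidNorm, Real.sq_sqrt (Finset.sum_nonneg fun t _ => sq_nonneg _)]
  simp only [dotProduct, sq]

theorem isIdempotentElem_mul_mul {α : Type*} [Semigroup α] {S N M : α}
    (hS : S * S = M) (hN : N * M * N = N) : IsIdempotentElem (S * N * S) := by
  calc S * N * S * (S * N * S) = S * (N * (S * S) * N) * S := by simp only [mul_assoc]
    _ = S * N * S := by rw [hS, hN, mul_assoc]

namespace Matrix

variable {m n R : Type*} [Fintype m]

theorem dotProduct_transpose_mul_mul_mulVec [Fintype n] [CommSemiring R] (B : Matrix m n R)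
    (C : Matrix m m R) (w : n → R) : w ⬝ᵥ (Bᵀ * C * B) *ᵥ w = (B *ᵥ w) ⬝ᵥ C *ᵥ (B *ᵥ w) := by
  rw [← mulVec_mulVec, ← mulVec_mulVec, dotProduct_mulVec, vecMul_transpose]

theorem isSymm_transpose_mul_mul [CommSemiring R] {C : Matrix m m R} (hC : C.IsSymm)
    (B : Matrix m n R) : (Bᵀ * C * B).IsSymm := by
  rw [IsSymm, transpose_mul, transpose_mul, hC.eq, transpose_transpose, Matrix.mul_assoc]

variable [CommRing R] [LinearOrder R] [IsStrictOrderedRing R]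

theorem dotProduct_mulVec_le_dotProduct_self [DecidableEq m] {P : Matrix m m R}
    (hsymm : P.IsSymm) (hidem : IsIdempotentElem P) (w : m → R) :
    w ⬝ᵥ P *ᵥ w ≤ w ⬝ᵥ w := by
  set Q := 1 - P
  have hQ : Qᵀ * Q = Q := by
    rw [(isSymm_one.sub hsymm).eq]
    exact (IsIdempotentElem.one_sub hidem).eq
  have hQw : 0 ≤ w ⬝ᵥ Q *ᵥ w := by
    rw [← hQ, ← mulVec_mulVec, dotProduct_mulVec, vecMul_transpose]
    exact Finset.sum_nonneg fun i _ => mul_self_nonneg _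
  rwa [sub_mulVec, one_mulVec, dotProduct_sub, sub_nonneg] at hQw

theorem dotProduct_self_le_mul_dotProduct_diagonal_mulVec [DecidableEq m] {c : m → R} {K : R}
    (hc : ∀ t, 1 ≤ K * c t) (u : m → R) : u ⬝ᵥ u ≤ K * (u ⬝ᵥ diagonal c *ᵥ u) := by
  simp only [dotProduct, mulVec_diagonal, Finset.mul_sum]
  refine Finset.sum_le_sum fun t _ => ?_
  nlinarith [mul_le_mul_of_nonneg_left (hc t) (mul_self_nonneg (u t))]

end Matrix

theorem one_le_mul_add_inv_mul_inv {a b s D A : ℝ} (ha : 0 < a) (hb : 0 < b)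
    (hba : b ≤ D * a) (haA : a ≤ A) (hs : 0 ≤ s) : 1 ≤ D * A ^ 2 * (s + a⁻¹ * b⁻¹) := by
  have hD : 0 < D := pos_of_mul_pos_left (hb.trans_le hba) ha.le
  have hab : a * b ≤ D * A ^ 2 :=
    calc a * b ≤ a * (D * a) := by gcongr
      _ = D * a ^ 2 := by ring
      _ ≤ D * A ^ 2 := by gcongr
  calc 1 ≤ D * A ^ 2 * (a⁻¹ * b⁻¹) := by
        rw [← mul_inv, ← div_eq_mul_inv, le_div_iff₀ (mul_pos ha hb), one_mul]; exact hab
    _ ≤ D * A ^ 2 * (s + a⁻¹ * b⁻¹) := by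
        have : 0 ≤ D * A ^ 2 := mul_nonneg hD.le (sq_nonneg A)
        gcongr; linarith

theorem RMhalf_norm_bound_general {T q : ℕ} (R : Matrix (Fin T) (Fin q) ℝ)
    (a b y : Fin T → ℝ) (ha : ∀ t, 0 < a t) (hb : ∀ t, 0 < b t)
    (D A : ℝ) (hD : 1 ≤ D) (hba : ∀ t, b t ≤ D * a t) (haA : ∀ t, a t ≤ A)
    (N M : Matrix (Fin q) (Fin q) ℝ)
    (hN : N = Rᵀ * Matrix.diagonal (fun t => y t ^ 2 + (a t)⁻¹ * (b t)⁻¹) * R)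
    (hM1 : N * M * N = N)
    (Msqrt : Matrix (Fin q) (Fin q) ℝ) (hMs : Msqrt.PosSemidef)
    (hMs2 : Msqrt * Msqrt = M) :
    ∀ w : Fin q → ℝ, euclidNorm ((R * Msqrt).mulVec w) ^ 2 ≤ D * A ^ 2 * euclidNorm w ^ 2 := by
  intro w
  set c : Fin T → ℝ := fun t => y t ^ 2 + (a t)⁻¹ * (b t)⁻¹
  have hSsymm : Msqrt.IsSymm := isHermitian_iff_isSymm.mp hMs.1
  have hP : (R * Msqrt)ᵀ * diagonal c * (R * Msqrt) = Msqrt * N * Msqrt := by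
    rw [transpose_mul, hSsymm.eq, hN]; simp only [Matrix.mul_assoc]
  have hproj := dotProduct_mulVec_le_dotProduct_self
    (hP ▸ isSymm_transpose_mul_mul (isSymm_diagonal c) (R * Msqrt))
    (isIdempotentElem_mul_mul hMs2 hM1) w
  have hc : ∀ t, 1 ≤ D * A ^ 2 * c t := fun t =>
    one_le_mul_add_inv_mul_inv (ha t) (hb t) (hba t) (haA t) (sq_nonneg (y t))
  have hK : 0 ≤ D * A ^ 2 := mul_nonneg (zero_le_one.trans hD) (sq_nonneg A)
  rw [euclidNorm_sq, euclidNorm_sq]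
  calc (R * Msqrt) *ᵥ w ⬝ᵥ (R * Msqrt) *ᵥ w
      ≤ D * A ^ 2 * ((R * Msqrt) *ᵥ w ⬝ᵥ diagonal c *ᵥ ((R * Msqrt) *ᵥ w)) :=
        dotProduct_self_le_mul_dotProduct_diagonal_mulVec hc _
    _ = D * A ^ 2 * (w ⬝ᵥ (Msqrt * N * Msqrt) *ᵥ w) := by
        rw [← hP, dotProduct_transpose_mul_mul_mulVec]
    _ ≤ D * A ^ 2 * (w ⬝ᵥ w) := by gcongr

/-- Bound on `‖R M^{1/2}‖` from the end of the proof of Theorem 3: with `D_a = diag(a)`,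
`D_b = diag(b)` positive, `b_t ≤ D̂ a_t`, `a_t ≤ A`, and
`M = (Rᵀ(Y² + D_a⁻¹ D_b⁻¹)R)⁺`, the squared spectral norm of `R M^{1/2}` is at most
`D̂ A²`. -/
theorem RMhalf_norm_bound {T q : ℕ} (R : Matrix (Fin T) (Fin q) ℝ)
    (a b y : Fin T → ℝ) (ha : ∀ t, 0 < a t) (hb : ∀ t, 0 < b t)
    (D A : ℝ) (hD : 1 ≤ D) (hba : ∀ t, b t ≤ D * a t) (haA : ∀ t, a t ≤ A)
    (N M : Matrix (Fin q) (Fin q) ℝ)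
    (hN : N = Rᵀ * Matrix.diagonal (fun t => y t ^ 2 + (a t)⁻¹ * (b t)⁻¹) * R)
    -- the four Penrose conditions for `M = N⁺`
    (hM1 : N * M * N = N) (hM2 : M * N * M = M)
    (hM3 : (N * M)ᵀ = N * M) (hM4 : (M * N)ᵀ = M * N)
    (Msqrt : Matrix (Fin q) (Fin q) ℝ) (hMs : Msqrt.PosSemidef)
    (hMs2 : Msqrt * Msqrt = M) :
    ∀ w : Fin q → ℝ, euclidNorm ((R * Msqrt).mulVec w) ^ 2 ≤ D * A ^ 2 * euclidNorm w ^ 2 :=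
  RMhalf_norm_bound_general R a b y ha hb D A hD hba haA N M hN hM1 Msqrt hMs hMs2
end

section
/- Let A, B, C be positive semidefinite T×T diagonal matrices and R a T×q matrix, with M = (Rᵀ(A + B)R)⁺. Then for any vector w ∈ ℝ^T, |M^{1/2} Rᵀ C^{1/2} w|₂² ≤ (max_t C_{tt}/(A_{tt} + B_{tt})) · wᵀ Π w, where Π = C^{1/2}R(Rᵀ C R)⁺ Rᵀ C^{1/2} is the orthogonal projector onto the column span of C^{1/2}R. -/
open Matrix BigOperators

/-- Euclidean norm of a finite real vector. -/
noncomputable def vecEnorm {n : ℕ} (w : Fin n → ℝ) : ℝ := Real.sqrt (∑ t, w t ^ 2)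

/-!
Put `v = Rᵀ C^{1/2} w`, `z = M v` and `x = (Rᵀ C R)⁺ v`. Since `Rᵀ D R = (Rᵀ D^{1/2})(Rᵀ D^{1/2})ᵀ`
for a nonnegative diagonal `D`, the identity `N M N = N` forces `N M` to fix the columns of
`Rᵀ D^{1/2}`; hence `(Rᵀ(A+B)R) z = v` and `(Rᵀ C R) x = v`. The left side is then
`v ⬝ z = zᵀ Rᵀ(A+B)R z = zᵀ Rᵀ C R x` and the right side is `K · v ⬝ x = K · xᵀ Rᵀ C R x`, with
`K = max_t c_t / (a_t + b_t)`. Cauchy–Schwarz for the weight `C`, followed by `C ≤ K (A+B)`,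
gives `(v ⬝ z)² ≤ (K · v ⬝ z)(v ⬝ x)`.
-/

theorem sum_mul_mul_self_le_of_le_mul {ι : Type*} [Fintype ι] {c d u y : ι → ℝ} {K : ℝ}
    (hc : ∀ t, 0 ≤ c t) (hd : ∀ t, 0 ≤ d t) (hK : 0 ≤ K) (hcd : ∀ t, c t ≤ K * d t)
    (h : ∑ t, c t * (u t * y t) = ∑ t, d t * (u t * u t)) :
    ∑ t, d t * (u t * u t) ≤ K * ∑ t, c t * (y t * y t) := by
  set s := ∑ t, d t * (u t * u t)
  have hs : 0 ≤ s := Finset.sum_nonneg fun t _ => mul_nonneg (hd t) (mul_self_nonneg _)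
  have hG : 0 ≤ ∑ t, c t * (y t * y t) :=
    Finset.sum_nonneg fun t _ => mul_nonneg (hc t) (mul_self_nonneg _)
  have hCS : s ^ 2 ≤ (∑ t, c t * (u t * u t)) * ∑ t, c t * (y t * y t) := by
    rw [← h]
    exact Finset.sum_sq_le_sum_mul_sum_of_sq_le_mul _
      (fun t _ => mul_nonneg (hc t) (mul_self_nonneg _))
      (fun t _ => mul_nonneg (hc t) (mul_self_nonneg _)) (fun t _ => le_of_eq (by ring))
  have hcomp : ∑ t, c t * (u t * u t) ≤ K * s := by
    rw [Finset.mul_sum]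
    exact Finset.sum_le_sum fun t _ => by
      rw [← mul_assoc K]; exact mul_le_mul_of_nonneg_right (hcd t) (mul_self_nonneg _)
  rcases hs.eq_or_lt with h₀ | h₀
  · rw [← h₀]; exact mul_nonneg hK hG
  · nlinarith [mul_le_mul_of_nonneg_right hcomp hG]

namespace Matrix

variable {m n : Type*}

theorem mul_eq_of_mul_self_mul_conjTranspose_eq [Fintype m] [Fintype n] [DecidableEq m]
    {R : Type*} [PartialOrder R] [Ring R] [StarRing R] [StarOrderedRing R] [NoZeroDivisors R]
    {P : Matrix m m R} {S : Matrix m n R} (h : P * (S * Sᴴ) = S * Sᴴ) : P * S = S := by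
  have h₀ : (P - 1) * (S * Sᴴ) = 0 := by rw [Matrix.sub_mul, h, Matrix.one_mul, sub_self]
  rwa [mul_self_mul_conjTranspose_eq_zero, Matrix.sub_mul, Matrix.one_mul, sub_eq_zero] at h₀

theorem mulVec_dotProduct_mulVec [Fintype m] [Fintype n] {α : Type*} [CommSemiring α]
    (A : Matrix m n α) (v w : n → α) : A *ᵥ v ⬝ᵥ A *ᵥ w = v ⬝ᵥ (Aᵀ * A) *ᵥ w := by
  rw [← mulVec_mulVec, dotProduct_mulVec v, vecMul_transpose]

theorem dotProduct_transpose_mul_diagonal_mul_mulVec [Fintype m] [Fintype n] [DecidableEq m]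
    (R : Matrix m n ℝ) (d : m → ℝ) (x y : n → ℝ) :
    x ⬝ᵥ (Rᵀ * diagonal d * R) *ᵥ y = ∑ t, d t * ((R *ᵥ x) t * (R *ᵥ y) t) := by
  rw [Matrix.mul_assoc, ← mulVec_mulVec, dotProduct_mulVec, vecMul_transpose, ← mulVec_mulVec]
  simp only [dotProduct, mulVec_diagonal]
  exact Finset.sum_congr rfl fun t _ => by ring

theorem dotProduct_le_mul_dotProduct_of_mulVec_eq [Fintype m] [Fintype n] [DecidableEq m]
    {R : Matrix m n ℝ} {c d : m → ℝ} {K : ℝ} (hc : ∀ t, 0 ≤ c t)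
    (hd : ∀ t, 0 ≤ d t) (hK : 0 ≤ K) (hcd : ∀ t, c t ≤ K * d t) {v z x : n → ℝ}
    (hz : (Rᵀ * diagonal d * R) *ᵥ z = v) (hx : (Rᵀ * diagonal c * R) *ᵥ x = v) :
    v ⬝ᵥ z ≤ K * (v ⬝ᵥ x) := by
  have hvz : v ⬝ᵥ z = ∑ t, d t * ((R *ᵥ z) t * (R *ᵥ z) t) := by
    rw [← hz, dotProduct_comm, dotProduct_transpose_mul_diagonal_mul_mulVec]
  have hvz' : v ⬝ᵥ z = ∑ t, c t * ((R *ᵥ z) t * (R *ᵥ x) t) := by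
    rw [← hx, dotProduct_comm, dotProduct_transpose_mul_diagonal_mul_mulVec]
  have hvx : v ⬝ᵥ x = ∑ t, c t * ((R *ᵥ x) t * (R *ᵥ x) t) := by
    rw [← hx, dotProduct_comm, dotProduct_transpose_mul_diagonal_mul_mulVec]
  rw [hvz, hvx]
  exact sum_mul_mul_self_le_of_le_mul hc hd hK hcd (hvz'.symm.trans hvz)

theorem transpose_mul_diagonal_mul_eq_mul_conjTranspose [Fintype m] [DecidableEq m]
    (R : Matrix m n ℝ) {d : m → ℝ} (hd : ∀ t, 0 ≤ d t) :
    Rᵀ * diagonal d * R =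
      Rᵀ * diagonal (fun t => √(d t)) * (Rᵀ * diagonal (fun t => √(d t)))ᴴ := by
  rw [conjTranspose_eq_transpose_of_trivial, transpose_mul, transpose_transpose,
    diagonal_transpose, Matrix.mul_assoc Rᵀ (diagonal _) (diagonal _ * R),
    ← Matrix.mul_assoc (diagonal _) (diagonal _) R, diagonal_mul_diagonal]
  simp_rw [Real.mul_self_sqrt (hd _)]
  exact Matrix.mul_assoc _ _ _

variable [Fintype m] [Fintype n] [DecidableEq m] [DecidableEq n]

theorem transpose_mul_diagonal_mul_mul_mul_transpose_mul_diagonal_sqrt {R : Matrix m n ℝ}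
    {d : m → ℝ} (hd : ∀ t, 0 ≤ d t) {M : Matrix n n ℝ}
    (hM : Rᵀ * diagonal d * R * M * (Rᵀ * diagonal d * R) = Rᵀ * diagonal d * R) :
    Rᵀ * diagonal d * R * M * (Rᵀ * diagonal (fun t => √(d t))) =
      Rᵀ * diagonal (fun t => √(d t)) := by
  rw [transpose_mul_diagonal_mul_eq_mul_conjTranspose R hd] at hM ⊢
  exact mul_eq_of_mul_self_mul_conjTranspose_eq hM

theorem transpose_mul_diagonal_mul_mul_mul_transpose {R : Matrix m n ℝ}
    {d : m → ℝ} (hd : ∀ t, 0 < d t) {M : Matrix n n ℝ}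
    (hM : Rᵀ * diagonal d * R * M * (Rᵀ * diagonal d * R) = Rᵀ * diagonal d * R) :
    Rᵀ * diagonal d * R * M * Rᵀ = Rᵀ := by
  have hsqrt := transpose_mul_diagonal_mul_mul_mul_transpose_mul_diagonal_sqrt
    (fun t => (hd t).le) hM
  have hinv : diagonal (fun t => √(d t)) * diagonal (fun t => (√(d t))⁻¹) = 1 := by
    rw [diagonal_mul_diagonal, ← diagonal_one]
    exact congrArg diagonal (funext fun t => mul_inv_cancel₀ (Real.sqrt_pos.mpr (hd t)).ne')
  simpa only [Matrix.mul_assoc, hinv, Matrix.mul_one] using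
    congrArg (· * diagonal (fun t => (√(d t))⁻¹)) hsqrt

end Matrix

theorem vecEnorm_sq {n : ℕ} (w : Fin n → ℝ) : vecEnorm w ^ 2 = w ⬝ᵥ w := by
  rw [vecEnorm, Real.sq_sqrt (Finset.sum_nonneg fun _ _ => sq_nonneg _)]
  simp only [dotProduct, sq]

theorem quadform_ratio_bound_general {T q : ℕ} (hT : 0 < T) (R : Matrix (Fin T) (Fin q) ℝ)
    (a b c : Fin T → ℝ) (hc : ∀ t, 0 ≤ c t)
    (hab : ∀ t, 0 < a t + b t)
    (N M : Matrix (Fin q) (Fin q) ℝ)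
    (hN : N = Rᵀ * Matrix.diagonal (fun t => a t + b t) * R)
    -- the four Penrose conditions for `M = N⁺`
    (hM1 : N * M * N = N)
    (Msqrt : Matrix (Fin q) (Fin q) ℝ) (hMs : Msqrt.PosSemidef) (hMs2 : Msqrt * Msqrt = M)
    (NC MC : Matrix (Fin q) (Fin q) ℝ)
    (hNC : NC = Rᵀ * Matrix.diagonal c * R)
    -- the four Penrose conditions for `MC = (Rᵀ C R)⁺`
    (hMC1 : NC * MC * NC = NC)
    (Pr : Matrix (Fin T) (Fin T) ℝ)
    (hPr : Pr = Matrix.diagonal (fun t => Real.sqrt (c t)) * R * MC * Rᵀ *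
      Matrix.diagonal (fun t => Real.sqrt (c t))) :
    ∀ w : Fin T → ℝ,
      vecEnorm ((Msqrt * Rᵀ * Matrix.diagonal (fun t => Real.sqrt (c t))).mulVec w) ^ 2 ≤
        (Finset.univ.sup' (Finset.univ_nonempty_iff.mpr ⟨⟨0, hT⟩⟩)
          fun t => c t / (a t + b t)) * (w ⬝ᵥ Pr.mulVec w) := by
  intro w
  subst hPr
  set K := Finset.univ.sup' (Finset.univ_nonempty_iff.mpr ⟨⟨0, hT⟩⟩) fun t => c t / (a t + b t)
  have hK : ∀ t, c t ≤ K * (a t + b t) := fun t =>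
    (div_le_iff₀ (hab t)).mp (Finset.le_sup' (fun t => c t / (a t + b t)) (Finset.mem_univ t))
  have hK₀ : 0 ≤ K := (div_nonneg (hc _) (hab _).le).trans
    (Finset.le_sup' (fun t => c t / (a t + b t)) (Finset.mem_univ ⟨0, hT⟩))
  set Cs := diagonal fun t => √(c t)
  set v := (Rᵀ * Cs) *ᵥ w
  set z := M *ᵥ v
  set x := MC *ᵥ v
  have hz : N *ᵥ z = v := by
    rw [mulVec_mulVec, mulVec_mulVec, ← Matrix.mul_assoc, hN,
      transpose_mul_diagonal_mul_mul_mul_transpose hab (hN ▸ hM1)]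
  have hx : NC *ᵥ x = v := by
    rw [mulVec_mulVec, mulVec_mulVec, hNC,
      transpose_mul_diagonal_mul_mul_mul_transpose_mul_diagonal_sqrt hc (hNC ▸ hMC1)]
  have hlhs : vecEnorm ((Msqrt * Rᵀ * Cs) *ᵥ w) ^ 2 = v ⬝ᵥ z := by
    rw [vecEnorm_sq, Matrix.mul_assoc, ← mulVec_mulVec, mulVec_dotProduct_mulVec,
      ← conjTranspose_eq_transpose_of_trivial Msqrt, hMs.isHermitian.eq, hMs2]
  have hrhs : w ⬝ᵥ (Cs * R * MC * Rᵀ * Cs) *ᵥ w = v ⬝ᵥ x := by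
    rw [show Cs * R * MC * Rᵀ * Cs = (Rᵀ * Cs)ᵀ * (MC * (Rᵀ * Cs)) by
      simp only [transpose_mul, transpose_transpose, Cs, diagonal_transpose, Matrix.mul_assoc],
      ← mulVec_mulVec, dotProduct_mulVec, vecMul_transpose, ← mulVec_mulVec _ MC]
  rw [hlhs, hrhs]
  exact dotProduct_le_mul_dotProduct_of_mulVec_eq hc (fun t => (hab t).le) hK₀ hK
    (hN ▸ hz) (hNC ▸ hx)

/-- Abstract form of steps (16b) and (17c) of the proof of Lemma 3: with diagonal
positive semidefinite matrices `A = diag(a)`, `B = diag(b)`, `C = diag(c)`,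
`M = (Rᵀ(A+B)R)⁺` and `Π = C^{1/2} R (Rᵀ C R)⁺ Rᵀ C^{1/2}` (the orthogonal projector
onto the column span of `C^{1/2} R`), one has for any `w`,
`|M^{1/2} Rᵀ C^{1/2} w|₂² ≤ (max_t c_t/(a_t + b_t)) · wᵀ Π w`. -/
theorem quadform_ratio_bound {T q : ℕ} (hT : 0 < T) (R : Matrix (Fin T) (Fin q) ℝ)
    (a b c : Fin T → ℝ) (ha : ∀ t, 0 ≤ a t) (hb : ∀ t, 0 ≤ b t) (hc : ∀ t, 0 ≤ c t)
    (hab : ∀ t, 0 < a t + b t)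
    (N M : Matrix (Fin q) (Fin q) ℝ)
    (hN : N = Rᵀ * Matrix.diagonal (fun t => a t + b t) * R)
    -- the four Penrose conditions for `M = N⁺`
    (hM1 : N * M * N = N) (hM2 : M * N * M = M)
    (hM3 : (N * M)ᵀ = N * M) (hM4 : (M * N)ᵀ = M * N)
    (Msqrt : Matrix (Fin q) (Fin q) ℝ) (hMs : Msqrt.PosSemidef) (hMs2 : Msqrt * Msqrt = M)
    (NC MC : Matrix (Fin q) (Fin q) ℝ)
    (hNC : NC = Rᵀ * Matrix.diagonal c * R)
    -- the four Penrose conditions for `MC = (Rᵀ C R)⁺`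
    (hMC1 : NC * MC * NC = NC) (hMC2 : MC * NC * MC = MC)
    (hMC3 : (NC * MC)ᵀ = NC * MC) (hMC4 : (MC * NC)ᵀ = MC * NC)
    (Pr : Matrix (Fin T) (Fin T) ℝ)
    (hPr : Pr = Matrix.diagonal (fun t => Real.sqrt (c t)) * R * MC * Rᵀ *
      Matrix.diagonal (fun t => Real.sqrt (c t))) :
    ∀ w : Fin T → ℝ,
      vecEnorm ((Msqrt * Rᵀ * Matrix.diagonal (fun t => Real.sqrt (c t))).mulVec w) ^ 2 ≤
        (Finset.univ.sup' (Finset.univ_nonempty_iff.mpr ⟨⟨0, hT⟩⟩)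
          fun t => c t / (a t + b t)) * (w ⬝ᵥ Pr.mulVec w) :=
  quadform_ratio_bound_general hT R a b c hc hab N M hN hM1 Msqrt hMs hMs2 NC MC hNC hMC1 Pr hPr
end

section
/- Let f: ℝ^p × ℝ^q → ℝ be defined by f(φ, α) = Σ_{t=1}^T [−log(R_{t,:}α) + (1/2)(y_t R_{t,:}α − X_{t,:}φ)²] + Σ_{k=1}^K λ_k |X_{:,G_k} φ_{G_k}|₂, on the domain {(φ,α) : R_{t,:}α > 0 for all t}, where λ_k ≥ 0. Then f is jointly convex in (φ, α). -/
/-!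
Each summand is a convex function of a linear image of `(φ, α)`: `-log` on `(0, ∞)` of
`R_{t,:}α`, the square of `y_t R_{t,:}α − X_{t,:}φ`, and the Euclidean norm of
`X_{:,G_k} φ_{G_k}`; nonnegative combinations of convex functions are convex.
-/

open Matrix BigOperators

open Set

theorem ConvexOn.sum {𝕜 E β ι : Type*} [Semiring 𝕜] [PartialOrder 𝕜] [AddCommMonoid E]
    [AddCommMonoid β] [PartialOrder β] [IsOrderedAddMonoid β] [SMul 𝕜 E] [Module 𝕜 β]
    {s : Set E} (hs : Convex 𝕜 s) (t : Finset ι) {f : ι → E → β}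
    (hf : ∀ i ∈ t, ConvexOn 𝕜 s (f i)) : ConvexOn 𝕜 s fun x => ∑ i ∈ t, f i x := by
  classical
  induction t using Finset.induction_on with
  | empty => simpa using convexOn_const 0 hs
  | insert i t hi ih =>
    simp only [Finset.sum_insert hi]
    exact (hf i (t.mem_insert_self i)).add (ih fun j hj => hf j (Finset.mem_insert_of_mem hj))

theorem vecEnorm_eq_norm {n : ℕ} (w : Fin n → ℝ) : vecEnorm w = ‖WithLp.toLp 2 w‖ := by
  simp [vecEnorm, EuclideanSpace.norm_eq]

section

variable {E : Type*} [AddCommGroup E] [Module ℝ E]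

theorem LinearMap.convexOn_neg_log_comp (ℓ : E →ₗ[ℝ] ℝ) :
    ConvexOn ℝ {x | 0 < ℓ x} fun x => -Real.log (ℓ x) :=
  strictConcaveOn_log_Ioi.concaveOn.neg.comp_linearMap ℓ

theorem LinearMap.convexOn_sq_comp (ℓ : E →ₗ[ℝ] ℝ) : ConvexOn ℝ univ fun x => ℓ x ^ 2 :=
  (Even.convexOn_pow (𝕜 := ℝ) (n := 2) even_two).comp_linearMap ℓ

theorem LinearMap.convexOn_vecEnorm_comp {n : ℕ} (L : E →ₗ[ℝ] Fin n → ℝ) :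
    ConvexOn ℝ univ fun x => vecEnorm (L x) := by
  simpa [vecEnorm_eq_norm, Function.comp_def] using
    convexOn_univ_norm.comp_linearMap ((WithLp.linearEquiv 2 ℝ (Fin n → ℝ)).symm.toLinearMap ∘ₗ L)

theorem LinearMap.convex_setOf_forall_pos {ι : Type*} (L : E →ₗ[ℝ] ι → ℝ) :
    Convex ℝ {x | ∀ i, 0 < L x i} := by
  simpa only [Set.preimage, Set.mem_pi, Set.mem_univ, Set.mem_Ioi, true_imp_iff] using
    (convex_pi (s := univ) fun i _ => convex_Ioi (0 : ℝ)).linear_preimage L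

end

theorem penalized_loglik_jointly_convex_general {T p q K : ℕ}
    (X : Matrix (Fin T) (Fin p) ℝ) (R : Matrix (Fin T) (Fin q) ℝ) (y : Fin T → ℝ)
    (G : Fin K → Finset (Fin p))
    (lam : Fin K → ℝ) (hlam : ∀ k, 0 ≤ lam k) :
    ConvexOn ℝ {pa : (Fin p → ℝ) × (Fin q → ℝ) | ∀ t, 0 < R.mulVec pa.2 t}
      (fun pa =>
        ∑ t, (-(Real.log (R.mulVec pa.2 t)) +
            (1 / 2) * (y t * R.mulVec pa.2 t - X.mulVec pa.1 t) ^ 2) +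
        ∑ k, lam k * vecEnorm (fun t => ∑ j ∈ G k, X t j * pa.1 j)) := by
  let Rα : (Fin p → ℝ) × (Fin q → ℝ) →ₗ[ℝ] Fin T → ℝ := R.mulVecLin ∘ₗ LinearMap.snd ℝ _ _
  let Xφ : (Fin p → ℝ) × (Fin q → ℝ) →ₗ[ℝ] Fin T → ℝ := X.mulVecLin ∘ₗ LinearMap.fst ℝ _ _
  have hS := Rα.convex_setOf_forall_pos
  refine .add (.sum hS _ fun t _ => .add ?_ ?_) (.sum hS _ fun k _ => ?_)
  · exact (LinearMap.proj t ∘ₗ Rα).convexOn_neg_log_comp.subset (fun pa h => h t) hS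
  · exact ((y t • LinearMap.proj t ∘ₗ Rα - LinearMap.proj t ∘ₗ Xφ).convexOn_sq_comp.smul
      (by norm_num)).subset (subset_univ _) hS
  · let XG : (Fin p → ℝ) × (Fin q → ℝ) →ₗ[ℝ] Fin T → ℝ :=
      { toFun := fun pa t => ∑ j ∈ G k, X t j * pa.1 j
        map_add' := fun a b => by ext; simp [mul_add, Finset.sum_add_distrib]
        map_smul' := fun c a => by ext; simp [Finset.mul_sum, mul_left_comm] }
    exact (XG.convexOn_vecEnorm_comp.smul (hlam k)).subset (subset_univ _) hS

/-- Joint convexity of the penalized log-likelihood (eq. (5)): the function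
`f(φ, α) = Σ_t [−log(R_{t,:}α) + ½(y_t R_{t,:}α − X_{t,:}φ)²]
  + Σ_k λ_k |X_{:,G_k} φ_{G_k}|₂`
is convex on the domain `{(φ, α) : R_{t,:}α > 0 ∀t}`, where `G₁,…,G_K` is a partition
of `{1,…,p}` and `λ_k ≥ 0`. -/
theorem penalized_loglik_jointly_convex {T p q K : ℕ}
    (X : Matrix (Fin T) (Fin p) ℝ) (R : Matrix (Fin T) (Fin q) ℝ) (y : Fin T → ℝ)
    (G : Fin K → Finset (Fin p))
    (hdisj : ∀ k k', k ≠ k' → Disjoint (G k) (G k'))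
    (hcover : Finset.univ.biUnion G = Finset.univ)
    (lam : Fin K → ℝ) (hlam : ∀ k, 0 ≤ lam k) :
    ConvexOn ℝ {pa : (Fin p → ℝ) × (Fin q → ℝ) | ∀ t, 0 < R.mulVec pa.2 t}
      (fun pa =>
        ∑ t, (-(Real.log (R.mulVec pa.2 t)) +
            (1 / 2) * (y t * R.mulVec pa.2 t - X.mulVec pa.1 t) ^ 2) +
        ∑ k, lam k * vecEnorm (fun t => ∑ j ∈ G k, X t j * pa.1 j)) :=
  penalized_loglik_jointly_convex_general X R y G lam hlam
end
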